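/- (Hahn property, discrete case.) Let q ∈ ℂ[z] with q(0) = 0, let P_n = Σ_{j=0}^n q(G)^j(φ_n)/j! with G = R(H)∘Δ, and let Ĝ = R(H+1)∘Δ = ρ·∏_{k=1}^d (H + α_k + 2)∘Δ. Define Q_m = Σ_{j=0}^m q(Ĝ)^j(φ_m)/j!. Then for every n ≥ 0, Δ(P_{n+1}) = (n+1)·Q_n; i.e., the polynomial system Q_n = ΔP_{n+1}/(n+1) coincides with the system of the same class built from Ĝ. -/
import Mathlib


open Polynomial

/-- Pochhammer symbol `(a)_j = a(a+1)⋯(a+j−1)`. -/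
noncomputable def poch (a : ℂ) (j : ℕ) : ℂ := ∏ s ∈ Finset.range j, (a + s)

/-- Multiplication by `x` on `ℂ[x]`. -/
noncomputable def Xop : Module.End ℂ (Polynomial ℂ) := LinearMap.mulLeft ℂ Polynomial.X

/-- The shift operator `f(x) ↦ f(x + c)` on `ℂ[x]`. -/
noncomputable def shiftOp (c : ℂ) : Module.End ℂ (Polynomial ℂ) :=
  (Polynomial.aeval (Polynomial.X + Polynomial.C c) :
    Polynomial ℂ →ₐ[ℂ] Polynomial ℂ).toLinearMap

/-- `(Δf)(x) = f(x+1) − f(x)`. -/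
noncomputable def Delt : Module.End ℂ (Polynomial ℂ) := shiftOp 1 - 1

/-- `(∇f)(x) = f(x−1) − f(x)`. -/
noncomputable def Nabl : Module.End ℂ (Polynomial ℂ) := shiftOp (-1) - 1

/-- `H = −x∇`, i.e., `(Hf)(x) = x(f(x) − f(x−1))`. -/
noncomputable def Hdis : Module.End ℂ (Polynomial ℂ) := -(Xop * Nabl)

/-- The falling-factorial polynomial `φ_n(x) = x(x−1)⋯(x−n+1)`. -/
noncomputable def ffact (n : ℕ) : Polynomial ℂ :=
  ∏ s ∈ Finset.range n, (Polynomial.X - Polynomial.C (s : ℂ))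

/-- `G = R(H)∘Δ` with `R(H) = ρ·∏_{k=1}^d (H + α_k + 1)`. -/
noncomputable def Gdis (d : ℕ) (α : ℕ → ℂ) (ρ : ℂ) : Module.End ℂ (Polynomial ℂ) :=
  (Polynomial.aeval Hdis
    (Polynomial.C ρ * ∏ k ∈ Finset.range d, (Polynomial.X + Polynomial.C (α k + 1)))) * Delt

/-- `Ĝ = R(H+1)∘Δ = ρ·∏_{k=1}^d (H + α_k + 2)∘Δ`. -/
noncomputable def Gdishat (d : ℕ) (α : ℕ → ℂ) (ρ : ℂ) : Module.End ℂ (Polynomial ℂ) :=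
  (Polynomial.aeval Hdis
    (Polynomial.C ρ * ∏ k ∈ Finset.range d, (Polynomial.X + Polynomial.C (α k + 2)))) * Delt

/-! ### Auxiliary lemmas -/

lemma shiftOp_apply (c : ℂ) (p : ℂ[X]) : shiftOp c p = p.comp (X + C c) := rfl

lemma Delt_apply (p : ℂ[X]) : Delt p = p.comp (X + C 1) - p := by
  simp [Delt, shiftOp_apply, LinearMap.sub_apply]

lemma Nabl_apply (p : ℂ[X]) : Nabl p = p.comp (X + C (-1)) - p := by
  simp [Nabl, shiftOp_apply, LinearMap.sub_apply]

lemma Hdis_apply (p : ℂ[X]) : Hdis p = -(X * (p.comp (X + C (-1)) - p)) := by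
  simp [Hdis, Xop, Nabl_apply, Module.End.mul_apply]

lemma comp_shift_shift (p : ℂ[X]) (a b : ℂ) :
    (p.comp (X + C a)).comp (X + C b) = p.comp (X + C (a + b)) := by
  rw [comp_assoc, add_comp, X_comp, C_comp, add_assoc, ← C_add, add_comm a b]

lemma key1 : Delt * Hdis = (Hdis + 1) * Delt := by
  refine LinearMap.ext fun p => ?_
  have h1 : (p.comp (X + C (-1))).comp (X + 1) = p := by
    rw [← C_1, comp_shift_shift]; simp
  have h2 : (p.comp (X + 1)).comp (X + C (-1)) = p := by
    rw [(by simp : (X + 1 : ℂ[X]) = X + C 1), comp_shift_shift]; simp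
  simp only [Module.End.mul_apply, LinearMap.add_apply, Module.End.one_apply,
    Delt_apply, Hdis_apply, C_1, neg_comp, mul_comp, sub_comp, X_comp, C_comp, h1, h2]
  ring

lemma inter_pow {A : Type*} [Ring A] {D a b : A} (h : D * a = b * D) :
    ∀ n : ℕ, D * a ^ n = b ^ n * D := by
  intro n
  induction n with
  | zero => simp
  | succ n ih =>
    rw [pow_succ, ← mul_assoc, ih, mul_assoc, h, ← mul_assoc, ← pow_succ]

lemma inter_aeval {A : Type*} [Ring A] [Algebra ℂ A] {D a b : A} (h : D * a = b * D)
    (S : ℂ[X]) : D * aeval a S = aeval b S * D := by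
  induction S using Polynomial.induction_on' with
  | add f g hf hg => rw [map_add, map_add, mul_add, add_mul, hf, hg]
  | monomial n c =>
    rw [aeval_monomial, aeval_monomial, ← mul_assoc, ← Algebra.commutes,
      mul_assoc, inter_pow h n, mul_assoc]

lemma keyShat (d : ℕ) (α : ℕ → ℂ) (ρ : ℂ) :
    aeval Hdis (C ρ * ∏ k ∈ Finset.range d, (X + C (α k + 2))) =
      aeval (Hdis + 1) (C ρ * ∏ k ∈ Finset.range d, (X + C (α k + 1))) := by
  have hc : (C ρ * ∏ k ∈ Finset.range d, (X + C (α k + 1))).comp (X + C 1) =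
      C ρ * ∏ k ∈ Finset.range d, (X + C (α k + 2)) := by
    rw [mul_comp, C_comp, prod_comp]
    congr 1
    refine Finset.prod_congr rfl fun k _ => ?_
    rw [add_comp, X_comp, C_comp, add_assoc, ← C_add]
    congr 2
    ring
  have h2 : aeval Hdis (X + C (1 : ℂ)) = Hdis + 1 := by
    simp [map_add, aeval_X, aeval_C, Algebra.algebraMap_eq_smul_one]
  rw [← hc, aeval_comp, h2]

lemma key3 (d : ℕ) (α : ℕ → ℂ) (ρ : ℂ) :
    Delt * Gdis d α ρ = Gdishat d α ρ * Delt := by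
  unfold Gdis Gdishat
  rw [← mul_assoc, inter_aeval key1, keyShat, mul_assoc]

lemma key4 (d : ℕ) (α : ℕ → ℂ) (ρ : ℂ) (q : ℂ[X]) :
    Delt * aeval (Gdis d α ρ) q = aeval (Gdishat d α ρ) q * Delt :=
  inter_aeval (key3 d α ρ) q

/-! ### Degree lemmas -/

lemma degree_comp_linear (c : ℂ) (p : ℂ[X]) : (p.comp (X + C c)).degree = p.degree := by
  rcases eq_or_ne p 0 with rfl | hp
  · simp
  have hne : p.comp (X + C c) ≠ 0 := by
    intro h
    have h2 := congrArg (fun r : ℂ[X] => r.comp (X + C (-c))) h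
    simp only [zero_comp] at h2
    rw [comp_shift_shift] at h2
    simp only [add_neg_cancel, C_0, add_zero, comp_X] at h2
    exact hp h2
  rw [degree_eq_natDegree hp, degree_eq_natDegree hne, natDegree_comp]
  simp

lemma degree_shift_sub_lt (c : ℂ) (p : ℂ[X]) (hp : p ≠ 0) :
    (p.comp (X + C c) - p).degree < p.degree := by
  have hne : p.comp (X + C c) ≠ 0 := fun h => hp (by
    have h2 := degree_comp_linear c p
    rw [h, degree_zero] at h2
    exact degree_eq_bot.mp h2.symm)
  have hd : (p.comp (X + C c)).degree = p.degree := degree_comp_linear c p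
  have hlc : (p.comp (X + C c)).leadingCoeff = p.leadingCoeff := by
    rw [leadingCoeff_comp (by simp)]
    simp
  have := degree_sub_lt hd hne hlc
  rwa [hd] at this

lemma Delt_degree_lt (p : ℂ[X]) (hp : p ≠ 0) : (Delt p).degree < p.degree := by
  rw [Delt_apply]; exact degree_shift_sub_lt 1 p hp

lemma Hdis_degree_le (p : ℂ[X]) : (Hdis p).degree ≤ p.degree := by
  rcases eq_or_ne p 0 with rfl | hp
  · simp
  rw [Hdis_apply, degree_neg, degree_mul, degree_X]
  have h := Nat.WithBot.add_one_le_of_lt (degree_shift_sub_lt (-1) p hp)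
  rwa [add_comm] at h

lemma aeval_deg_le (T : Module.End ℂ ℂ[X]) (hT : ∀ p : ℂ[X], (T p).degree ≤ p.degree)
    (S : ℂ[X]) (p : ℂ[X]) : ((aeval T S) p).degree ≤ p.degree := by
  have hpow : ∀ (n : ℕ) (p : ℂ[X]), ((T ^ n) p).degree ≤ p.degree := by
    intro n
    induction n with
    | zero => intro p; simp
    | succ n ih =>
      intro p
      rw [pow_succ, Module.End.mul_apply]
      exact (ih _).trans (hT p)
  induction S using Polynomial.induction_on' with
  | add f g hf hg =>
    rw [map_add, LinearMap.add_apply]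
    exact (degree_add_le _ _).trans (max_le hf hg)
  | monomial n c =>
    rw [aeval_monomial, Module.End.mul_apply, Module.algebraMap_end_apply]
    exact (degree_smul_le _ _).trans (hpow n p)

lemma Gdishat_deg_lt (d : ℕ) (α : ℕ → ℂ) (ρ : ℂ) (p : ℂ[X]) (hp : p ≠ 0) :
    ((Gdishat d α ρ) p).degree < p.degree := by
  unfold Gdishat
  rw [Module.End.mul_apply]
  exact lt_of_le_of_lt (aeval_deg_le Hdis Hdis_degree_le _ _) (Delt_degree_lt p hp)

lemma Gdishat_deg_le (d : ℕ) (α : ℕ → ℂ) (ρ : ℂ) (p : ℂ[X]) :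
    ((Gdishat d α ρ) p).degree ≤ p.degree := by
  rcases eq_or_ne p 0 with rfl | hp
  · simp
  · exact (Gdishat_deg_lt d α ρ p hp).le

lemma qGhat_lt (d : ℕ) (α : ℕ → ℂ) (ρ : ℂ) (q : ℂ[X]) (hq : q.eval 0 = 0)
    (p : ℂ[X]) (hp : p ≠ 0) :
    ((aeval (Gdishat d α ρ) q) p).degree < p.degree := by
  obtain ⟨q₂, rfl⟩ : X ∣ q := X_dvd_iff.mpr (by rwa [coeff_zero_eq_eval_zero])
  rw [map_mul, aeval_X, Module.End.mul_apply]
  rcases eq_or_ne ((aeval (Gdishat d α ρ) q₂) p) 0 with h | h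
  · rw [h, map_zero, degree_zero]
    exact lt_of_le_of_ne bot_le (fun hb => hp (degree_eq_bot.mp hb.symm))
  · exact (Gdishat_deg_lt d α ρ _ h).trans_le
      (aeval_deg_le (Gdishat d α ρ) (Gdishat_deg_le d α ρ) q₂ p)

lemma kill (d : ℕ) (α : ℕ → ℂ) (ρ : ℂ) (q : ℂ[X]) (hq : q.eval 0 = 0) :
    ∀ (m : ℕ) (p : ℂ[X]), p.degree < (m : ℕ) → ((aeval (Gdishat d α ρ) q) ^ m) p = 0 := by
  intro m
  induction m with
  | zero =>
    intro p hp
    have : p = 0 := degree_eq_bot.mp (Nat.WithBot.lt_zero_iff.mp (by exact_mod_cast hp))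
    simp [this]
  | succ m ih =>
    intro p hp
    rw [pow_succ, Module.End.mul_apply]
    apply ih
    rcases eq_or_ne p 0 with rfl | h
    · rw [map_zero, degree_zero]
      exact WithBot.bot_lt_coe _
    · have h1 := qGhat_lt d α ρ q hq p h
      have h2 : p.degree ≤ (m : WithBot ℕ) := by
        rw [degree_eq_natDegree h] at hp ⊢
        exact_mod_cast Nat.lt_succ_iff.mp (by exact_mod_cast hp)
      exact h1.trans_le h2

lemma ffact_degree (n : ℕ) : (ffact n).degree = n := by
  unfold ffact
  rw [degree_prod]
  rw [Finset.sum_congr rfl fun (s : ℕ) _ => degree_X_sub_C (s : ℂ)]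
  simp

lemma ffact_ne_zero (n : ℕ) : ffact n ≠ 0 := fun h => by
  have := ffact_degree n
  rw [h, degree_zero] at this
  exact (by simp at this)

lemma Delt_ffact (n : ℕ) : Delt (ffact (n + 1)) = ((n : ℂ) + 1) • ffact n := by
  rw [Delt_apply]
  have hcomp : (ffact (n + 1)).comp (X + C 1) = (X + C 1) * ffact n := by
    unfold ffact
    rw [prod_comp, Finset.prod_range_succ', mul_comm]
    congr 1
    · simp
    · refine Finset.prod_congr rfl fun s _ => ?_
      rw [sub_comp, X_comp, C_comp]
      push_cast
      rw [C_add, C_1]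
      ring
  have hsucc : ffact (n + 1) = ffact n * (X - C (n : ℂ)) := by
    unfold ffact
    rw [Finset.prod_range_succ]
  rw [hcomp, hsucc, smul_eq_C_mul, C_add, C_1]
  ring

/-- Hahn property (discrete case): `Δ(P_{n+1}) = (n+1)·Q_n` where `Q` is the system built
from `Ĝ`. -/
theorem stmt8 (d : ℕ) (α : ℕ → ℂ) (ρ : ℂ) (hρ : ρ ≠ 0)
    (q : Polynomial ℂ) (hq : q.eval 0 = 0) :
    let P : ℕ → Polynomial ℂ := fun n => ∑ j ∈ Finset.range (n + 1),
      ((j.factorial : ℂ))⁻¹ • ((Polynomial.aeval (Gdis d α ρ) q) ^ j) (ffact n)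
    let Q : ℕ → Polynomial ℂ := fun m => ∑ j ∈ Finset.range (m + 1),
      ((j.factorial : ℂ))⁻¹ • ((Polynomial.aeval (Gdishat d α ρ) q) ^ j) (ffact m)
    ∀ n : ℕ, Delt (P (n + 1)) = ((n : ℂ) + 1) • Q n := by
  intro P Q n
  have hterm : ∀ j : ℕ, Delt (((aeval (Gdis d α ρ) q) ^ j) (ffact (n + 1))) =
      ((n : ℂ) + 1) • (((aeval (Gdishat d α ρ) q) ^ j) (ffact n)) := by
    intro j
    have h := LinearMap.congr_fun (inter_pow (key4 d α ρ q) j) (ffact (n + 1))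
    rw [Module.End.mul_apply, Module.End.mul_apply] at h
    rw [h, Delt_ffact, map_smul]
  have hkill : ((aeval (Gdishat d α ρ) q) ^ (n + 1)) (ffact n) = 0 := by
    apply kill d α ρ q hq
    rw [ffact_degree]
    exact_mod_cast Nat.lt_succ_self n
  show Delt (∑ j ∈ Finset.range (n + 1 + 1),
      ((j.factorial : ℂ))⁻¹ • ((aeval (Gdis d α ρ) q) ^ j) (ffact (n + 1))) = _
  rw [map_sum]
  simp_rw [map_smul, hterm]
  rw [Finset.sum_range_succ, hkill, smul_zero, smul_zero, add_zero]
  rw [Finset.smul_sum]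
  exact Finset.sum_congr rfl fun j _ => smul_comm _ _ _
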